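/- arXiv:1207.0723 — 2 statements merged into one kernel-verified Lean document; each statement's English description precedes it below -/
import Mathlib

section
/- Fix an integer N ≥ 1 and γ ∈ ℝ. For every f ∈ C^∞(ℝ^N, ℂ), every w ∈ S_N and every regular point x ∈ ℝ^N_reg, one has (P^γ_N (w^γ f))(x) = (P^γ_N f)(w^{-1} x); that is, the propagation operator intertwines the integral-reflection action w^γ with the geometric permutation action of S_N. -/
open scoped BigOperators
open MeasureTheory Complex

noncomputable section

abbrev Pt (N : ℕ) := Fin N → ℝ
abbrev Fn (N : ℕ) := Pt N → ℂ

/-- The permutation `w` acting on points: `(w • x) j = x (w⁻¹ j)`. -/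
def permPt {N : ℕ} (w : Equiv.Perm (Fin N)) (x : Pt N) : Pt N := fun j => x (w⁻¹ j)

/-- The fundamental (positive) alcove `ℝ^N_+ = {x : x_1 > … > x_N}`. -/
def posAlcove (N : ℕ) : Set (Pt N) := {x | ∀ i j : Fin N, i < j → x j < x i}

/-- The alcove `w⁻¹ ℝ^N_+`. -/
def alcove {N : ℕ} (w : Equiv.Perm (Fin N)) : Set (Pt N) := {x | permPt w x ∈ posAlcove N}

/-- Regular vectors: pairwise distinct coordinates. -/
def regPts (N : ℕ) : Set (Pt N) := {x | ∀ i j : Fin N, i ≠ j → x i ≠ x j}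

/-- Partial derivative in the `j`-th coordinate. -/
def pd {N : ℕ} (j : Fin N) (f : Fn N) : Fn N :=
  fun x => deriv (fun t : ℝ => f (Function.update x j t)) (x j)

/-- The plane wave `e^{iλ}`. -/
def planeWave {N : ℕ} (lam : Fin N → ℂ) : Fn N :=
  fun x => Complex.exp (Complex.I * ∑ j, lam j * (x j : ℂ))

/-- The integral operator `I_{jk}`:
`(I_{jk} f)(x) = ∫_0^{x_j-x_k} f(x - y(e_j - e_k)) dy`. -/
def Iop {N : ℕ} (j k : Fin N) (f : Fn N) : Fn N :=
  fun x => ∫ y in (0:ℝ)..(x j - x k),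
    f (Function.update (Function.update x j (x j - y)) k (x k + y))

/-- The integral-reflection operator `s^γ` associated to the transposition `(j k)`. -/
def sIR {N : ℕ} (γ : ℝ) (j k : Fin N) (f : Fn N) : Fn N :=
  fun x => f (permPt (Equiv.swap j k) x) + (γ : ℂ) * Iop j k f x

/-- The integral-reflection operator for the simple transposition `s_j = (j, j+1)`
(zero-based); identity for out-of-range `j`. -/
def sSimple {N : ℕ} (γ : ℝ) (j : ℕ) (f : Fn N) : Fn N :=
  if h : j + 1 < N then sIR γ ⟨j, Nat.lt_of_succ_lt h⟩ ⟨j + 1, h⟩ f else f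

/-- `w^γ` computed from a word `L` of simple reflections:
`wordOp γ [i₁,…,i_l] f = s_{i₁}^γ (⋯ (s_{i_l}^γ f))`. -/
def wordOp {N : ℕ} (γ : ℝ) (L : List ℕ) (f : Fn N) : Fn N :=
  L.foldr (fun j g => sSimple γ j g) f

/-- The simple transposition `s_j` (zero-based); identity for out-of-range `j`. -/
def simpleT (N : ℕ) (j : ℕ) : Equiv.Perm (Fin N) :=
  if h : j + 1 < N then Equiv.swap ⟨j, Nat.lt_of_succ_lt h⟩ ⟨j + 1, h⟩ else 1

/-- The permutation represented by a word of simple reflections. -/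
def wordPerm (N : ℕ) (L : List ℕ) : Equiv.Perm (Fin N) := (L.map (simpleT N)).prod

/-- `P` is the propagation operator `P^γ_N`: for continuous `f`, `P f` is continuous and
on the alcove `w⁻¹ ℝ^N_+` it equals `(w^γ f)(w x)`, where `w^γ` may be computed from any
word of simple reflections representing `w` (the operators `s_j^γ` satisfy the relations
of the symmetric group, so this does not depend on the word). -/
def IsPropagation {N : ℕ} (γ : ℝ) (P : Fn N → Fn N) : Prop :=
  ∀ f : Fn N, Continuous f →
    Continuous (P f) ∧
    ∀ (w : Equiv.Perm (Fin N)) (L : List ℕ),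
      (∀ j ∈ L, j + 1 < N) → wordPerm N L = w →
      ∀ x ∈ alcove w, P f x = wordOp γ L f (permPt w x)

open scoped Classical in
/-- The operator `Λ_j` entering the Dunkl-type operator `∂_j^γ = ∂_j - γ Λ_j`. -/
def LambdaOp {N : ℕ} (j : Fin N) (f : Fn N) : Fn N := fun x =>
  (∑ k : Fin N, if k < j ∧ x k < x j then f (permPt (Equiv.swap j k) x) else 0)
    - ∑ k : Fin N, if j < k ∧ x j < x k then f (permPt (Equiv.swap j k) x) else 0

/-- Membership in `CB^∞(ℝ^N)`: continuous, and smooth on every alcove. -/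
def CBsmooth {N : ℕ} (f : Fn N) : Prop :=
  Continuous f ∧ ∀ w : Equiv.Perm (Fin N), ContDiffOn ℝ (⊤ : ℕ∞) f (alcove w)

/-- Membership in `sol^γ_λ`: lies in `CB^∞(ℝ^N)` and satisfies `∂_j^γ f = iλ_j f`
on the regular vectors for every `j`. -/
def memSol {N : ℕ} (γ : ℝ) (lam : Fin N → ℂ) (f : Fn N) : Prop :=
  CBsmooth f ∧ ∀ j : Fin N, ∀ x ∈ regPts N,
    pd j f x - (γ : ℂ) * LambdaOp j f x = Complex.I * lam j * f x

open scoped Classical in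
/-- Coxeter length = number of inversions. -/
def invCount {N : ℕ} (w : Equiv.Perm (Fin N)) : ℕ :=
  (Finset.univ.filter fun p : Fin N × Fin N => p.1 < p.2 ∧ w p.2 < w p.1).card

/-- `x + δ(e_j - e_k)`. -/
def jumpShift {N : ℕ} (j k : Fin N) (δ : ℝ) (x : Pt N) : Pt N :=
  Function.update (Function.update x j (x j + δ)) k (x k - δ)

/-- The derivative jump conditions with coupling `γ`: at every subregular point of
every wall `{x_j = x_k}` (`j < k`), the jump of `(∂_j - ∂_k) f` equals `2γ f(x)`. -/
def SatisfiesJump {N : ℕ} (γ : ℝ) (f : Fn N) : Prop :=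
  ∀ j k : Fin N, j < k → ∀ x : Pt N, x j = x k →
    (∀ l m : Fin N, l < m → ¬(l = j ∧ m = k) → x l ≠ x m) →
    Filter.Tendsto
      (fun δ : ℝ =>
        (pd j f (jumpShift j k δ x) - pd k f (jumpShift j k δ x))
          - (pd j f (jumpShift j k (-δ) x) - pd k f (jumpShift j k (-δ) x)))
      (nhdsWithin 0 (Set.Ioi 0)) (nhds (2 * (γ : ℂ) * f x))

open scoped Classical in
/-- Indicator of a strictly decreasing chain of real numbers. -/
def chainInd (l : List ℝ) : ℂ := if List.Chain' (fun a b => b < a) l then 1 else 0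

/-- Iterated integral entering `ê⁻_{μ;i}`: for the list `[i₁,…,i_n]`, the upper limit of
the `y_m`-integral is `x_{i_{m-1}}` (threaded through `ub`, starting at `x_{N+1}`), the lower
limit is `x_{i_m}`, and the coordinate `i_m` of the argument is replaced by `y_m`. -/
def eMinusAux {N : ℕ} (μ : ℂ) (f : Fn N) (x : Pt (N + 1)) :
    List (Fin N) → ℝ → Pt N → ℂ
  | [], _, z => f z
  | i :: rest, ub, z =>
      ∫ y in (x i.castSucc)..ub,
        Complex.exp (Complex.I * μ * ((x i.castSucc - y : ℝ) : ℂ)) *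
          eMinusAux μ f x rest (x i.castSucc) (Function.update z i y)

/-- The elementary creation operator `ê⁻_{μ;i}`. -/
def ehatMinus {N : ℕ} (μ : ℂ) (l : List (Fin N)) (f : Fn N) : Fn (N + 1) :=
  fun x =>
    chainInd (x (Fin.last N) :: l.map fun i => x i.castSucc) *
      Complex.exp (Complex.I * μ * ((x (Fin.last N) : ℝ) : ℂ)) *
      eMinusAux μ f x l (x (Fin.last N)) (fun j => x j.castSucc)

/-- Iterated integral entering `ê⁺_{μ;i}`: the lower limit of the `y_m`-integral is
`x_{i_{m+1}+1}` (the coordinate of the next entry, or `x_1` at the end), the upper limit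
is `x_{i_m+1}`, and the coordinate `i_m` of the argument is replaced by `y_m`. -/
def ePlusAux {N : ℕ} (μ : ℂ) (f : Fn N) (x : Pt (N + 1)) :
    List (Fin N) → Pt N → ℂ
  | [], z => f z
  | i :: rest, z =>
      ∫ y in (match rest with
              | [] => x 0
              | j :: _ => x j.succ)..(x i.succ),
        Complex.exp (Complex.I * μ * ((x i.succ - y : ℝ) : ℂ)) *
          ePlusAux μ f x rest (Function.update z i y)

/-- The elementary creation operator `ê⁺_{μ;i}`. -/
def ehatPlus {N : ℕ} (μ : ℂ) (l : List (Fin N)) (f : Fn N) : Fn (N + 1) :=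
  fun x =>
    chainInd ((l.map fun i => x i.succ) ++ [x 0]) *
      Complex.exp (Complex.I * μ * ((x 0 : ℝ) : ℂ)) *
      ePlusAux μ f x l (fun j => x j.succ)

/-- The non-symmetric creation operator
`b⁻_μ = ∑_{n=0}^N γⁿ ∑_{i ∈ 𝔦ⁿ_{[1,N]}} ê⁻_{μ;i}` (tuples of pairwise distinct indices
are encoded as injections `Fin n ↪ Fin N`). -/
def bMinus {N : ℕ} (γ : ℝ) (μ : ℂ) (f : Fn N) : Fn (N + 1) :=
  fun x => ∑ n ∈ Finset.range (N + 1), (γ : ℂ) ^ n *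
    ∑ e : Fin n ↪ Fin N, ehatMinus μ (List.ofFn ⇑e) f x

/-- The non-symmetric creation operator `b⁺_μ`. -/
def bPlus {N : ℕ} (γ : ℝ) (μ : ℂ) (f : Fn N) : Fn (N + 1) :=
  fun x => ∑ n ∈ Finset.range (N + 1), (γ : ℂ) ^ n *
    ∑ e : Fin n ↪ Fin N, ehatPlus μ (List.ofFn ⇑e) f x

/-- `φ̌⁺`: evaluate the first coordinate at `x⁺`. -/
def phiCheckPlus {k : ℕ} (xp : ℝ) (f : Fn (k + 1)) : Fn k := fun x => f (Fin.cons xp x)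

/-- `φ̌⁻`: evaluate the last coordinate at `x⁻`. -/
def phiCheckMinus {k : ℕ} (xm : ℝ) (f : Fn (k + 1)) : Fn k := fun x => f (Fin.snoc x xm)

/-- `b^ε_μ`, `ε = +` encoded as `true` and `ε = -` as `false`. -/
def bEps (ε : Bool) {k : ℕ} (γ : ℝ) (μ : ℂ) (f : Fn k) : Fn (k + 1) :=
  if ε then bPlus γ μ f else bMinus γ μ f

/-- `ê^ε_{μ;i}`. -/
def ehatEps (ε : Bool) {N : ℕ} (μ : ℂ) (l : List (Fin N)) (f : Fn N) : Fn (N + 1) :=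
  if ε then ehatPlus μ l f else ehatMinus μ l f

/-- `φ̌^ε`. -/
def phiEps (ε : Bool) {k : ℕ} (xp xm : ℝ) (f : Fn (k + 1)) : Fn k :=
  if ε then phiCheckPlus xp f else phiCheckMinus xm f

/-- `a^ε_μ = φ̌^ε ∘ b^ε_μ`. -/
def aEps (ε : Bool) {k : ℕ} (γ : ℝ) (xp xm : ℝ) (μ : ℂ) (f : Fn k) : Fn k :=
  phiEps ε xp xm (bEps ε γ μ f)

/-- The sign `ε = ±1` of `ε ∈ {+,-}`. -/
def sgn (ε : Bool) : ℂ := if ε then 1 else -1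

/-- `s⁺` (swap of the first two coordinates of `ℝ^{N+2}`) resp. `s⁻` (swap of the last two). -/
def sEps (ε : Bool) (N : ℕ) : Equiv.Perm (Fin (N + 2)) :=
  if ε then Equiv.swap 0 1 else Equiv.swap ⟨N, by omega⟩ ⟨N + 1, by omega⟩

/-- Iterated integral entering `č⁺_{μ;i}` (the variables `y_1,…,y_n`). -/
def cAuxPlus {N : ℕ} (μ : ℂ) (xp : ℝ) (x : Pt N) (g : Pt N → ℂ) :
    List (Fin N) → Pt N → ℂ
  | [], z => g z
  | i :: rest, z =>
      ∫ y in (match rest with | [] => xp | j :: _ => x j)..(x i),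
        Complex.exp (Complex.I * μ * ((x i - y : ℝ) : ℂ)) *
          cAuxPlus μ xp x g rest (Function.update z i y)

/-- The elementary operator `č⁺_{μ;i}` (with `x_{i_0} := x⁻` and `x_{i_{n+1}} := x⁺`;
the variable `y_0` is plugged in as the final argument of `f`). -/
def cCheckPlus {N : ℕ} (μ : ℂ) (xp xm : ℝ) (l : List (Fin N)) (f : Fn (N + 1)) : Fn N :=
  fun x =>
    chainInd (l.map x) * Complex.exp (Complex.I * μ * ((xp : ℝ) : ℂ)) *
      ∫ y0 in (match l with | [] => xp | i :: _ => x i)..xm,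
        Complex.exp (Complex.I * μ * ((xm - y0 : ℝ) : ℂ)) *
          cAuxPlus μ xp x (fun z => f (Fin.snoc z y0)) l x

/-- Iterated integral entering `č⁻_{μ;i}` (the variables `y_1,…,y_{n+1}`;
the variable `y_{n+1}` is plugged in as the first argument of `f`). -/
def cAuxMinus {N : ℕ} (μ : ℂ) (xp : ℝ) (x : Pt N) (f : Fn (N + 1)) :
    List (Fin N) → ℝ → Pt N → ℂ
  | [], ub, z =>
      ∫ y in xp..ub, Complex.exp (Complex.I * μ * ((xp - y : ℝ) : ℂ)) * f (Fin.cons y z)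
  | i :: rest, ub, z =>
      ∫ y in (x i)..ub,
        Complex.exp (Complex.I * μ * ((x i - y : ℝ) : ℂ)) *
          cAuxMinus μ xp x f rest (x i) (Function.update z i y)

/-- The elementary operator `č⁻_{μ;i}` (with `x_{i_0} := x⁻` and `x_{i_{n+1}} := x⁺`). -/
def cCheckMinus {N : ℕ} (μ : ℂ) (xp xm : ℝ) (l : List (Fin N)) (f : Fn (N + 1)) : Fn N :=
  fun x => chainInd (l.map x) * Complex.exp (Complex.I * μ * ((xm : ℝ) : ℂ)) *
    cAuxMinus μ xp x f l xm x

/-- `č^ε_{μ;i}`. -/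
def cCheckEps (ε : Bool) {N : ℕ} (μ : ℂ) (xp xm : ℝ) (l : List (Fin N)) (f : Fn (N + 1)) :
    Fn N :=
  if ε then cCheckPlus μ xp xm l f else cCheckMinus μ xp xm l f

/-- The operator `c⁺_μ = ∑_{n=0}^N γ^{n+1} ∑_i č⁺_{μ;i}`. -/
def cPlusOp {N : ℕ} (γ : ℝ) (μ : ℂ) (xp xm : ℝ) (f : Fn (N + 1)) : Fn N :=
  fun x => ∑ n ∈ Finset.range (N + 1), (γ : ℂ) ^ (n + 1) *
    ∑ e : Fin n ↪ Fin N, cCheckPlus μ xp xm (List.ofFn ⇑e) f x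

/-- The operator `c⁻_μ = ∑_{n=0}^N γ^{n+1} ∑_i č⁻_{μ;i}`. -/
def cMinusOp {N : ℕ} (γ : ℝ) (μ : ℂ) (xp xm : ℝ) (f : Fn (N + 1)) : Fn N :=
  fun x => ∑ n ∈ Finset.range (N + 1), (γ : ℂ) ^ (n + 1) *
    ∑ e : Fin n ↪ Fin N, cCheckMinus μ xp xm (List.ofFn ⇑e) f x

/-- `c^ε_μ`. -/
def cEps (ε : Bool) {N : ℕ} (γ : ℝ) (μ : ℂ) (xp xm : ℝ) (f : Fn (N + 1)) : Fn N :=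
  if ε then cPlusOp γ μ xp xm f else cMinusOp γ μ xp xm f

/-- The closed box `J^M = [x⁺,x⁻]^M`. -/
def box (M : ℕ) (xp xm : ℝ) : Set (Pt M) := {x | ∀ j, x j ∈ Set.Icc xp xm}

/-- The `L²(J^M)` inner product `⟨u,v⟩_M = ∫_{J^M} u · conj v`. -/
def ipJ {M : ℕ} (xp xm : ℝ) (u v : Fn M) : ℂ :=
  ∫ x in box M xp xm, u x * (starRingEnd ℂ) (v x)

/-- Smooth functions compactly supported in the open box `(x⁺,x⁻)^M`. -/
def IsTestFn {M : ℕ} (xp xm : ℝ) (f : Fn M) : Prop :=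
  ContDiff ℝ (⊤ : ℕ∞) f ∧ HasCompactSupport f ∧ ∀ x, f x ≠ 0 → ∀ j, x j ∈ Set.Ioo xp xm

/-- The symmetrizer `𝒮_N = (1/N!) ∑_{w ∈ S_N} w`. -/
def symN (N : ℕ) (f : Fn N) : Fn N :=
  fun x => (N.factorial : ℂ)⁻¹ * ∑ w : Equiv.Perm (Fin N), f (permPt w⁻¹ x)

open scoped Classical in
/-- `G^γ_μ = ∏_{j<k} (μ_j - μ_k - iγ)/(μ_j - μ_k)`. -/
def Gcoef {N : ℕ} (γ : ℝ) (mu : Fin N → ℂ) : ℂ :=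
  ∏ p ∈ Finset.univ.filter (fun p : Fin N × Fin N => p.1 < p.2),
    (mu p.1 - mu p.2 - Complex.I * (γ : ℂ)) / (mu p.1 - mu p.2)

/-- The decreasing rearrangement `x↓`. -/
def decRearrange {N : ℕ} (x : Pt N) : Pt N := fun j => x (Tuple.sort x (Fin.rev j))

/-- The Bethe wavefunction
`Ψ_λ(x) = (1/N!) ∑_{w ∈ S_N} G^γ_{wλ} exp(i ∑_j (wλ)_j (x↓)_j)`. -/
def Bethe {N : ℕ} (γ : ℝ) (lam : Fin N → ℂ) : Fn N :=
  fun x => (N.factorial : ℂ)⁻¹ * ∑ w : Equiv.Perm (Fin N),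
    Gcoef γ (fun j => lam (w⁻¹ j)) *
      Complex.exp (Complex.I * ∑ j, lam (w⁻¹ j) * ((decRearrange x j : ℝ) : ℂ))

/-- The transpositions of consecutive entries of a list:
`adjSwaps [a₁,…,a_m] = [(a₁ a₂), (a₂ a₃), …, (a_{m-1} a_m)]`. -/
def adjSwaps {M : ℕ} : List (Fin M) → List (Equiv.Perm (Fin M))
  | [] => []
  | [_] => []
  | a :: b :: rest => Equiv.swap a b :: adjSwaps (b :: rest)

/-- `b⁻_{λ_N} (b⁻_{λ_{N-1}} (⋯ (b⁻_{λ_1} 1)))`. -/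
def iterBMinus (γ : ℝ) : (N : ℕ) → (Fin N → ℂ) → Fn N
  | 0, _ => fun _ => 1
  | N + 1, lam => bMinus γ (lam (Fin.last N)) (iterBMinus γ N (fun j => lam j.castSucc))

/-- `b⁺_{λ_1} (b⁺_{λ_2} (⋯ (b⁺_{λ_N} 1)))`. -/
def iterBPlus (γ : ℝ) : (N : ℕ) → (Fin N → ℂ) → Fn N
  | 0, _ => fun _ => 1
  | N + 1, lam => bPlus γ (lam 0) (iterBPlus γ N (fun j => lam j.succ))

/-! On the alcove `v⁻¹ ℝ^N_+` containing a regular point `x`, `P (w^γ f) x = v^γ (w^γ f) (v x)`.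
Since `v^γ ∘ w^γ = (v w)^γ` on concatenated words and `v x = (v w) (w⁻¹ x)` with `w⁻¹ x` in the
alcove `(v w)⁻¹ ℝ^N_+`, this is `P f (w⁻¹ x)`. -/

lemma continuous_permPt {N : ℕ} (w : Equiv.Perm (Fin N)) : Continuous (permPt w) :=
  continuous_pi fun _ => continuous_apply _

lemma continuous_Iop {N : ℕ} (j k : Fin N) {f : Fn N} (hf : Continuous f) :
    Continuous (Iop j k f) := by
  apply intervalIntegral.continuous_parametric_intervalIntegral_of_continuous (μ := volume)
    (f := fun x y => f (Function.update (Function.update x j (x j - y)) k (x k + y)))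
  · refine hf.comp (continuous_pi fun i => ?_)
    show Continuous fun p : Pt N × ℝ =>
      Function.update (Function.update p.1 j (p.1 j - p.2)) k (p.1 k + p.2) i
    simp only [Function.update_apply]
    split_ifs <;> fun_prop
  · fun_prop

lemma continuous_sSimple {N : ℕ} (γ : ℝ) (j : ℕ) {f : Fn N} (hf : Continuous f) :
    Continuous (sSimple γ j f) := by
  unfold sSimple
  split_ifs
  · exact (hf.comp (continuous_permPt _)).add (continuous_const.mul (continuous_Iop _ _ hf))
  · exact hf

lemma continuous_wordOp {N : ℕ} (γ : ℝ) (L : List ℕ) {f : Fn N} (hf : Continuous f) :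
    Continuous (wordOp γ L f) := by
  induction L with
  | nil => exact hf
  | cons j L ih => exact continuous_sSimple γ j ih

lemma wordOp_append {N : ℕ} (γ : ℝ) (L₁ L₂ : List ℕ) (f : Fn N) :
    wordOp γ (L₁ ++ L₂) f = wordOp γ L₁ (wordOp γ L₂ f) := by
  simp [wordOp, List.foldr_append]

lemma wordPerm_append (N : ℕ) (L₁ L₂ : List ℕ) :
    wordPerm N (L₁ ++ L₂) = wordPerm N L₁ * wordPerm N L₂ := by
  simp [wordPerm]

lemma permPt_mul {N : ℕ} (u v : Equiv.Perm (Fin N)) (x : Pt N) :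
    permPt (u * v) x = permPt u (permPt v x) := by
  funext j
  simp [permPt, mul_inv_rev]

lemma exists_wordPerm_eq (N : ℕ) (v : Equiv.Perm (Fin N)) :
    ∃ L : List ℕ, (∀ j ∈ L, j + 1 < N) ∧ wordPerm N L = v := by
  cases N with
  | zero => exact ⟨[], by simp, Subsingleton.elim _ _⟩
  | succ n =>
    have hv : v ∈ Submonoid.closure
        (Set.range fun i : Fin n => Equiv.swap i.castSucc i.succ) := by
      rw [Equiv.Perm.mclosure_swap_castSucc_succ]
      trivial
    induction hv using Submonoid.closure_induction with
    | mem g hg =>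
      obtain ⟨i, rfl⟩ := hg
      have hi : i.val + 1 < n + 1 := Nat.succ_lt_succ i.isLt
      refine ⟨[i.val], by simp, ?_⟩
      simp only [wordPerm, List.map_singleton, List.prod_singleton, simpleT, dif_pos hi]
      rfl
    | one => exact ⟨[], by simp, by simp [wordPerm]⟩
    | mul a b _ _ ha hb =>
      obtain ⟨La, hLa, rfl⟩ := ha
      obtain ⟨Lb, hLb, rfl⟩ := hb
      refine ⟨La ++ Lb, fun j hj => ?_, wordPerm_append _ _ _⟩
      rcases List.mem_append.1 hj with h | h
      exacts [hLa j h, hLb j h]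

lemma exists_mem_alcove {N : ℕ} {x : Pt N} (hx : x ∈ regPts N) :
    ∃ v : Equiv.Perm (Fin N), x ∈ alcove v := by
  set σ := Tuple.sort x
  refine ⟨(σ * Fin.revPerm)⁻¹, fun i j hij => ?_⟩
  have hsorted : permPt (σ * Fin.revPerm)⁻¹ x = fun l => x (σ (Fin.rev l)) := by
    funext l
    simp [permPt, Fin.revPerm]
  rw [hsorted]
  have hle : x (σ (Fin.rev j)) ≤ x (σ (Fin.rev i)) :=
    Tuple.monotone_sort x (Fin.rev_lt_rev.2 hij).le
  exact hle.lt_of_ne (hx _ _ fun h => hij.ne' (Fin.rev_injective (σ.injective h)))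

lemma permPt_inv_mem_alcove_mul {N : ℕ} {v : Equiv.Perm (Fin N)} {x : Pt N}
    (hx : x ∈ alcove v) (w : Equiv.Perm (Fin N)) : permPt w⁻¹ x ∈ alcove (v * w) := by
  show permPt (v * w) (permPt w⁻¹ x) ∈ posAlcove N
  rwa [← permPt_mul, mul_inv_cancel_right]

theorem IsPropagation.apply_wordOp {N : ℕ} {γ : ℝ} {P : Fn N → Fn N}
    (hP : IsPropagation γ P) {f : Fn N} (hf : Continuous f) {w : Equiv.Perm (Fin N)}
    {L : List ℕ} (hL : ∀ j ∈ L, j + 1 < N) (hLw : wordPerm N L = w) {x : Pt N}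
    (hx : x ∈ regPts N) : P (wordOp γ L f) x = P f (permPt w⁻¹ x) := by
  obtain ⟨v, hv⟩ := exists_mem_alcove hx
  obtain ⟨L', hL', rfl⟩ := exists_wordPerm_eq N v
  have hword : ∀ j ∈ L' ++ L, j + 1 < N := fun j hj =>
    (List.mem_append.1 hj).elim (hL' j) (hL j)
  rw [(hP _ (continuous_wordOp γ L hf)).2 _ L' hL' rfl x hv,
    (hP f hf).2 _ (L' ++ L) hword (by rw [wordPerm_append, hLw]) _
      (permPt_inv_mem_alcove_mul hv w),
    wordOp_append, ← permPt_mul, mul_inv_cancel_right]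

theorem statement_1_general (N : ℕ) (γ : ℝ) (P : Fn N → Fn N)
    (hP : IsPropagation γ P) (f : Fn N) (hf : ContDiff ℝ (⊤ : ℕ∞) f)
    (w : Equiv.Perm (Fin N)) (L : List ℕ) (hL : ∀ j ∈ L, j + 1 < N)
    (hLw : wordPerm N L = w) (x : Pt N) (hx : x ∈ regPts N) :
    P (wordOp γ L f) x = P f (permPt w⁻¹ x) :=
  hP.apply_wordOp hf.continuous hL hLw hx

/-- the propagation operator intertwines the integral-reflection action
`w^γ` with the geometric action of `S_N`: `(P^γ_N (w^γ f))(x) = (P^γ_N f)(w⁻¹ x)` for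
every smooth `f` and regular `x`. (`w^γ` is computed via any word `L` of simple
reflections representing `w`.) -/
theorem statement_1 (N : ℕ) (hN : 1 ≤ N) (γ : ℝ) (P : Fn N → Fn N)
    (hP : IsPropagation γ P) (f : Fn N) (hf : ContDiff ℝ (⊤ : ℕ∞) f)
    (w : Equiv.Perm (Fin N)) (L : List ℕ) (hL : ∀ j ∈ L, j + 1 < N)
    (hLw : wordPerm N L = w) (x : Pt N) (hx : x ∈ regPts N) :
    P (wordOp γ L f) x = P f (permPt w⁻¹ x) :=
  statement_1_general N γ P hP f hf w L hL hLw x hx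

end
end

section
/- Fix an integer N ≥ 1, γ ∈ ℝ and λ ∈ ℂ^N, and let w ∈ S_N. Suppose f ∈ sol^γ_λ satisfies f(0) = 0. If f vanishes identically on the alcove w̃^{-1} ℝ^N_+ for every w̃ ∈ S_N whose Coxeter length satisfies ℓ(w̃) < ℓ(w), then f vanishes identically on the alcove w^{-1} ℝ^N_+. -/
open scoped BigOperators
open MeasureTheory Complex

noncomputable section

/-!
At a point `x` of the alcove of `w`, the reflected value `f (s_{jk} x)` enters `Λ_j f` only
when the coordinates `j, k` are out of order in `x`, i.e. when `w` inverts the pair; then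
`s_{jk} x` lies in the alcove of `w s_{jk}`, which has fewer inversions, so the value vanishes.
On this alcove the Dunkl system thus reduces to `∂_j f = iλ_j f`, so `f · e^{-i⟨λ, x⟩}` has
zero derivative on the open convex alcove and is constant. The alcove is a cone with apex `0`,
so by continuity the constant is `f 0 = 0`.
-/

section

variable {N : ℕ}

lemma mem_alcove_iff {w : Equiv.Perm (Fin N)} {x : Pt N} :
    x ∈ alcove w ↔ ∀ a b, w a < w b → x b < x a := by
  refine ⟨fun hx a b h => by simpa [permPt] using hx (w a) (w b) h, fun hx i j h => ?_⟩
  exact hx (w⁻¹ i) (w⁻¹ j) (by simpa using h)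

lemma lt_of_mem_alcove {w : Equiv.Perm (Fin N)} {x : Pt N} (hx : x ∈ alcove w) {a b : Fin N}
    (h : x a < x b) : w b < w a := by
  rcases lt_trichotomy (w a) (w b) with hab | hab | hab
  · exact absurd (mem_alcove_iff.1 hx a b hab) h.not_gt
  · exact absurd (congrArg x (w.injective hab)) h.ne
  · exact hab

lemma alcove_subset_regPts (w : Equiv.Perm (Fin N)) : alcove w ⊆ regPts N := by
  intro x hx a b hab
  rcases lt_trichotomy (w a) (w b) with h | h | h
  · exact (mem_alcove_iff.1 hx a b h).ne'
  · exact absurd (w.injective h) hab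
  · exact (mem_alcove_iff.1 hx b a h).ne

lemma isOpen_alcove (w : Equiv.Perm (Fin N)) : IsOpen (alcove w) := by
  have : alcove w = ⋂ a, ⋂ b, ⋂ (_ : w a < w b), {x : Pt N | x b < x a} := by
    ext x
    simp [mem_alcove_iff]
  rw [this]
  exact isOpen_iInter_of_finite fun a => isOpen_iInter_of_finite fun b =>
    isOpen_iInter_of_finite fun _ => isOpen_lt (continuous_apply b) (continuous_apply a)

lemma convex_alcove (w : Equiv.Perm (Fin N)) : Convex ℝ (alcove w) := by
  intro x hx y hy s t hs ht hst
  refine mem_alcove_iff.2 fun a b h => ?_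
  have hxab := mem_alcove_iff.1 hx a b h
  have hyab := mem_alcove_iff.1 hy a b h
  simp only [Pi.add_apply, Pi.smul_apply, smul_eq_mul]
  rcases hs.eq_or_lt with rfl | hs
  · simp_all
  · nlinarith [mul_lt_mul_of_pos_left hxab hs, mul_le_mul_of_nonneg_left hyab.le ht]

lemma smul_mem_alcove {w : Equiv.Perm (Fin N)} {x : Pt N} (hx : x ∈ alcove w) {t : ℝ}
    (ht : 0 < t) : t • x ∈ alcove w :=
  mem_alcove_iff.2 fun a b h => mul_lt_mul_of_pos_left (mem_alcove_iff.1 hx a b h) ht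

lemma zero_mem_closure_alcove {w : Equiv.Perm (Fin N)} {x : Pt N} (hx : x ∈ alcove w) :
    (0 : Pt N) ∈ closure (alcove w) := by
  refine mem_closure_of_tendsto (b := nhdsWithin (0 : ℝ) (Set.Ioi 0)) (f := fun t => t • x) ?_
    (eventually_nhdsWithin_of_forall fun t ht => smul_mem_alcove hx ht)
  have : Filter.Tendsto (fun t : ℝ => t • x) (nhds 0) (nhds ((0 : ℝ) • x)) :=
    (continuous_id.smul continuous_const).tendsto 0
  simpa using this.mono_left nhdsWithin_le_nhds

lemma permPt_mem_alcove {w : Equiv.Perm (Fin N)} {x : Pt N} (hx : x ∈ alcove w)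
    (σ : Equiv.Perm (Fin N)) : permPt σ x ∈ alcove (w * σ⁻¹) :=
  mem_alcove_iff.2 fun a b h => mem_alcove_iff.1 hx _ _ (by simpa using h)

lemma eq_or_eq_of_swap_apply_lt_swap_apply {j k a b : Fin N} (hjk : j < k) (hab : a < b)
    (h : Equiv.swap j k b < Equiv.swap j k a) : a = j ∨ b = k := by
  simp only [Equiv.swap_apply_def] at h
  split_ifs at h <;> omega

lemma invCount_mul_swap_lt {w : Equiv.Perm (Fin N)} {j k : Fin N} (hjk : j < k)
    (hw : w k < w j) : invCount (w * Equiv.swap j k) < invCount w := by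
  set t := Equiv.swap j k
  -- `ψ` injects the inversions of `w * t` into those of `w` other than `(j, k)`
  let ψ : Fin N × Fin N → Fin N × Fin N := fun p => if t p.1 < t p.2 then (t p.1, t p.2) else p
  have hψψ : ∀ p : Fin N × Fin N, p.1 < p.2 → ψ (ψ p) = p := by
    rintro ⟨a, b⟩ hab
    by_cases h : t a < t b <;> simp [ψ, h, hab, t]
  rw [invCount, invCount]
  refine lt_of_le_of_lt (Finset.card_le_card_of_injOn ψ (fun p hp => Finset.mem_coe.2 ?_) ?_)
    (Finset.card_erase_lt_of_mem (a := (j, k)) (by simpa using ⟨hjk, hw⟩))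
  · obtain ⟨a, b⟩ := p
    obtain ⟨hab, hval⟩ : a < b ∧ w (t b) < w (t a) := by
      simpa using (Finset.mem_filter.1 (Finset.mem_coe.1 hp)).2
    simp only [Finset.mem_erase, Finset.mem_filter, Finset.mem_univ, true_and, ψ]
    split_ifs with h
    · refine ⟨fun he => ?_, h, hval⟩
      simp only [Prod.mk.injEq, t, Equiv.swap_apply_eq_iff, Equiv.swap_apply_left,
        Equiv.swap_apply_right] at he
      exact absurd (he.1 ▸ he.2 ▸ hab) hjk.not_gt
    · have h' : t b < t a := lt_of_le_of_ne (not_lt.1 h) (t.injective.ne hab.ne')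
      have := eq_or_eq_of_swap_apply_lt_swap_apply hjk hab h'
      simp only [t, Equiv.swap_apply_def] at hval h'
      split_ifs at hval h' <;> grind
  · intro p hp q hq hpq
    rw [Finset.mem_coe, Finset.mem_filter] at hp hq
    rw [← hψψ p hp.2.1, ← hψψ q hq.2.1, hpq]

lemma lambdaOp_eq_zero_of_forall_invCount_lt {w : Equiv.Perm (Fin N)} {f : Fn N}
    (hvan : ∀ w' : Equiv.Perm (Fin N), invCount w' < invCount w → ∀ x ∈ alcove w', f x = 0)
    {x : Pt N} (hx : x ∈ alcove w) (j : Fin N) : LambdaOp j f x = 0 := by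
  have hswap : ∀ k, invCount (w * Equiv.swap j k) < invCount w →
      f (permPt (Equiv.swap j k) x) = 0 := fun k hk =>
    hvan _ hk _ (by simpa using permPt_mem_alcove hx (Equiv.swap j k))
  rw [LambdaOp, Finset.sum_eq_zero, Finset.sum_eq_zero, sub_zero]
  · intro k _
    split_ifs with h
    · exact hswap k (invCount_mul_swap_lt h.1 (lt_of_mem_alcove hx h.2))
    · rfl
  · intro k _
    split_ifs with h
    · exact hswap k (Equiv.swap_comm j k ▸ invCount_mul_swap_lt h.1 (lt_of_mem_alcove hx h.2))
    · rfl

lemma pd_eq_fderiv_single {f : Fn N} {x : Pt N} (hf : DifferentiableAt ℝ f x) (j : Fin N) :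
    pd j f x = fderiv ℝ f x (Pi.single j 1) := by
  have hf' : HasFDerivAt f (fderiv ℝ f x) (Function.update x j (x j)) := by
    simpa using hf.hasFDerivAt
  exact (hf'.comp_hasDerivAt (x j) (hasDerivAt_update x j (x j))).deriv

lemma eqOn_zero_of_hasFDerivAt_smul {E : Type*} [NormedAddCommGroup E] [NormedSpace ℝ E]
    {U : Set E} (hUo : IsOpen U) (hUc : IsPreconnected U) {f : E → ℂ} (hf : Continuous f)
    {L : E →L[ℝ] ℂ} (hfL : ∀ x ∈ U, HasFDerivAt f (f x • L) x) {y : E} (hy : y ∈ closure U)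
    (hfy : f y = 0) : ∀ x ∈ U, f x = 0 := by
  have hg : ∀ x ∈ U, HasFDerivAt (fun z => f z * Complex.exp (-L z)) (0 : E →L[ℝ] ℂ) x := by
    intro x hx
    refine ((hfL x hx).mul (L.hasFDerivAt (x := x)).neg.cexp).congr_fderiv ?_
    ext v
    simp only [add_apply, smul_apply, neg_apply, zero_apply, smul_eq_mul]
    ring
  obtain ⟨c, hc⟩ := hUo.exists_is_const_of_fderiv_eq_zero hUc
    (fun x hx => (hg x hx).differentiableAt.differentiableWithinAt) (fun x hx => (hg x hx).fderiv)
  have hcy : f y * Complex.exp (-L y) = c := Set.EqOn.closure (g := fun _ => c) hc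
    (hf.mul (Complex.continuous_exp.comp L.continuous.neg)) continuous_const hy
  intro x hx
  simpa [← hcy, hfy, Complex.exp_ne_zero] using hc x hx

lemma hasFDerivAt_of_pd_eq_mul {f : Fn N} {x : Pt N} (hf : DifferentiableAt ℝ f x) {c : Fin N → ℂ}
    (hc : ∀ j, pd j f x = c j * f x) :
    HasFDerivAt f (f x • ∑ j, c j • Complex.ofRealCLM.comp (ContinuousLinearMap.proj j)) x := by
  refine hf.hasFDerivAt.congr_fderiv (ContinuousLinearMap.coe_injective ?_)
  ext j
  simp [← pd_eq_fderiv_single hf, hc, Pi.single_apply, mul_comm, apply_ite]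

end

theorem statement_2_general (N : ℕ) (γ : ℝ) (lam : Fin N → ℂ)
    (w : Equiv.Perm (Fin N)) (f : Fn N) (hf : memSol γ lam f)
    (h0 : f (fun _ => 0) = 0)
    (hvan : ∀ w' : Equiv.Perm (Fin N), invCount w' < invCount w →
      ∀ x ∈ alcove w', f x = 0) :
    ∀ x ∈ alcove w, f x = 0 := by
  obtain ⟨⟨hcont, hsmooth⟩, hdunkl⟩ := hf
  have hpd : ∀ x ∈ alcove w, ∀ j, pd j f x = Complex.I * lam j * f x := fun x hx j => by
    simpa [lambdaOp_eq_zero_of_forall_invCount_lt hvan hx j] using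
      hdunkl j x (alcove_subset_regPts w hx)
  have hderiv : ∀ x ∈ alcove w, HasFDerivAt f (f x • ∑ j, (Complex.I * lam j) •
      Complex.ofRealCLM.comp (ContinuousLinearMap.proj j)) x := fun x hx =>
    hasFDerivAt_of_pd_eq_mul (((hsmooth w).differentiableOn (by simp)).differentiableAt
      ((isOpen_alcove w).mem_nhds hx)) (hpd x hx)
  intro x hx
  exact eqOn_zero_of_hasFDerivAt_smul (isOpen_alcove w) (convex_alcove w).isPreconnected hcont
    hderiv (zero_mem_closure_alcove hx) h0 x hx

/-- if `f ∈ sol^γ_λ` vanishes at the origin and on every alcove indexed by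
a permutation of smaller Coxeter length than `w`, then `f` vanishes on the alcove
`w⁻¹ ℝ^N_+`. -/
theorem statement_2 (N : ℕ) (hN : 1 ≤ N) (γ : ℝ) (lam : Fin N → ℂ)
    (w : Equiv.Perm (Fin N)) (f : Fn N) (hf : memSol γ lam f)
    (h0 : f (fun _ => 0) = 0)
    (hvan : ∀ w' : Equiv.Perm (Fin N), invCount w' < invCount w →
      ∀ x ∈ alcove w', f x = 0) :
    ∀ x ∈ alcove w, f x = 0 :=
  statement_2_general N γ lam w f hf h0 hvan

end
end
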